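/- arXiv:1207.2282 — 5 statements merged into one kernel-verified Lean document; each statement's English description precedes it below -/
import Mathlib

section
/- Every subgroup of finite index in ℤ × G, for G a finite group, is generated by {0} × H together with a single element (m, a), where H is a subgroup of G, m is a positive integer, and a is an element of the normalizer of H in G; conversely, each such triple (H, m, a) generates a finite-index subgroup of ℤ × G. -/
/-
Let `K` have finite index. Its projection to `ℤ` then has finite index, so it is `mℤ` with
`m > 0`; choose `(m, a) ∈ K` and let `H = {h | (0, h) ∈ K}`. Conjugating `(0, h)` by `(m, a)`
gives `(0, a h a⁻¹)`, so `a` normalizes `H`, and every `(k m, g) ∈ K` factors as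
`(0, g a⁻ᵏ) · (m, a)ᵏ`, so `K = Ĥ(H, m, a)`. Conversely `Ĥ(H, m, a)` contains
`(m, a) ^ ord a = (m · ord a, 1)`, hence the finite-index subgroup `(m · ord a)ℤ × 1`.
-/

/-- The subgroup `Ĥ(H, m, a)` of `ℤ × G` generated by `{0} × H` and `(m, a)`.
Since `ℤ` must be viewed multiplicatively to form the product group, we use
`Multiplicative ℤ × G`; the element `(0, h)` is `(1, h)` multiplicatively. -/
def hatSubgroup (G : Type*) [Group G] (H : Subgroup G) (m : ℤ) (a : G) :
    Subgroup (Multiplicative ℤ × G) :=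
  Subgroup.closure
    ((fun h => ((1 : Multiplicative ℤ), h)) '' (H : Set G) ∪ {(Multiplicative.ofAdd m, a)})

section

open Subgroup Multiplicative

lemma Int.exists_pos_eq_zmultiples_of_index_ne_zero {P : AddSubgroup ℤ} (hP : P.index ≠ 0) :
    ∃ m : ℤ, 0 < m ∧ P = AddSubgroup.zmultiples m := by
  obtain ⟨n, rfl⟩ := Int.subgroup_cyclic P
  rw [← AddSubgroup.zmultiples_eq_closure, ← Int.zmultiples_natAbs] at hP ⊢
  rw [Int.index_zmultiples, Int.natAbs_natCast] at hP
  exact ⟨n.natAbs, by positivity, rfl⟩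

variable {A G : Type*} [Group A] [Group G]

lemma mem_normalizer_comap_inr {K : Subgroup (A × G)} {x : A} {a : G} (hxa : (x, a) ∈ K) :
    a ∈ normalizer ((K.comap (MonoidHom.inr A G) : Subgroup G) : Set G) := by
  refine mem_normalizer_iff.2 fun h => ?_
  have hconj : (x, a) * (1, h) * (x, a)⁻¹ = ((1 : A), a * h * a⁻¹) := by simp
  simp only [mem_comap, MonoidHom.inr_apply]
  rw [← hconj, mul_mem_cancel_right (inv_mem hxa), mul_mem_cancel_left hxa]

lemma hatSubgroup_le_iff {H : Subgroup G} {m : ℤ} {a : G}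
    {K : Subgroup (Multiplicative ℤ × G)} :
    hatSubgroup G H m a ≤ K ↔ H ≤ K.comap (MonoidHom.inr _ G) ∧ (ofAdd m, a) ∈ K := by
  rw [hatSubgroup, closure_le, Set.union_subset_iff, Set.image_subset_iff,
    Set.singleton_subset_iff]
  rfl

lemma le_comap_inr_hatSubgroup (H : Subgroup G) (m : ℤ) (a : G) :
    H ≤ (hatSubgroup G H m a).comap (MonoidHom.inr _ G) :=
  (hatSubgroup_le_iff.1 le_rfl).1

lemma mk_ofAdd_mem_hatSubgroup (H : Subgroup G) (m : ℤ) (a : G) :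
    (ofAdd m, a) ∈ hatSubgroup G H m a :=
  (hatSubgroup_le_iff.1 le_rfl).2

lemma exists_pos_map_fst_eq_zmultiples {K : Subgroup (Multiplicative ℤ × G)}
    (hK : K.index ≠ 0) :
    ∃ m : ℤ, 0 < m ∧ K.map (MonoidHom.fst _ G) = (AddSubgroup.zmultiples m).toSubgroup := by
  have hfst : (K.map (MonoidHom.fst _ G)).index ≠ 0 := fun h =>
    hK (Nat.eq_zero_of_zero_dvd (h ▸ index_map_dvd K Prod.fst_surjective))
  obtain ⟨m, hm, hP⟩ := Int.exists_pos_eq_zmultiples_of_index_ne_zero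
    (P := (K.map (MonoidHom.fst _ G)).toAddSubgroup') hfst
  exact ⟨m, hm, by rw [← hP, OrderIso.apply_symm_apply]⟩

lemma eq_hatSubgroup_of_map_fst_eq_zmultiples {K : Subgroup (Multiplicative ℤ × G)} {m : ℤ}
    {a : G} (hma : (ofAdd m, a) ∈ K)
    (hK : K.map (MonoidHom.fst _ G) = (AddSubgroup.zmultiples m).toSubgroup) :
    K = hatSubgroup G (K.comap (MonoidHom.inr _ G)) m a := by
  refine le_antisymm (fun p hp => ?_) (hatSubgroup_le_iff.2 ⟨le_rfl, hma⟩)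
  obtain ⟨k, hk⟩ : p.1 ∈ (AddSubgroup.zmultiples m).toSubgroup := hK ▸ mem_map_of_mem _ hp
  set g := (ofAdd m, a) ^ k
  have hfst : (p * g⁻¹).1 = 1 := by
    rw [Prod.fst_mul, Prod.fst_inv, Prod.pow_fst, mul_inv_eq_one, ← ofAdd_toAdd p.1, ← hk,
      ofAdd_zsmul]
  have hsnd : (p * g⁻¹).2 ∈ K.comap (MonoidHom.inr _ G) := by
    change (1, _) ∈ K
    rw [← hfst]
    exact mul_mem hp (inv_mem (zpow_mem hma k))
  have hfiber : p * g⁻¹ ∈ hatSubgroup G (K.comap (MonoidHom.inr _ G)) m a := by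
    rw [show p * g⁻¹ = (1, (p * g⁻¹).2) from Prod.ext hfst rfl]
    exact le_comap_inr_hatSubgroup _ m a hsnd
  simpa only [g, inv_mul_cancel_right] using
    mul_mem hfiber (zpow_mem (mk_ofAdd_mem_hatSubgroup _ m a) k)

lemma index_ne_zero_of_mk_ofAdd_one_mem [Finite G] {K : Subgroup (Multiplicative ℤ × G)}
    {n : ℤ} (hn : n ≠ 0) (h : (ofAdd n, (1 : G)) ∈ K) : K.index ≠ 0 := by
  have hle : (AddSubgroup.zmultiples n).toSubgroup.prod ⊥ ≤ K := by
    rintro ⟨x, g⟩ ⟨⟨k, hk⟩, hg⟩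
    obtain rfl : g = 1 := hg
    obtain rfl : x = ofAdd n ^ k := by rw [← ofAdd_zsmul]; exact hk.symm
    simpa only [Prod.pow_mk, one_zpow] using zpow_mem h k
  intro h0
  have hd := index_dvd_of_le hle
  rw [index_prod, AddSubgroup.index_toSubgroup, Int.index_zmultiples, index_bot, h0] at hd
  exact mul_ne_zero (Int.natAbs_ne_zero.2 hn) Nat.card_pos.ne' (Nat.eq_zero_of_zero_dvd hd)

end

/-- Every finite-index subgroup of `ℤ × G` (`G` a finite group) is of the form
`Ĥ(H, m, a)` for some subgroup `H ≤ G`, positive integer `m`, and `a` in the normalizer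
of `H`; conversely each such triple generates a finite-index subgroup. -/
theorem finiteIndex_subgroup_eq_hat {G : Type*} [Group G] [Finite G] :
    (∀ K : Subgroup (Multiplicative ℤ × G), K.index ≠ 0 →
      ∃ (H : Subgroup G) (m : ℤ) (a : G),
        0 < m ∧ a ∈ Subgroup.normalizer (H : Set G) ∧ K = hatSubgroup G H m a) ∧
    (∀ (H : Subgroup G) (m : ℤ) (a : G), 0 < m → a ∈ Subgroup.normalizer (H : Set G) →
      (hatSubgroup G H m a).index ≠ 0) := by
  constructor
  · intro K hK
    obtain ⟨m, hm, hP⟩ := exists_pos_map_fst_eq_zmultiples hK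
    obtain ⟨⟨x, a⟩, ha, hx : x = Multiplicative.ofAdd m⟩ :
        Multiplicative.ofAdd m ∈ K.map (MonoidHom.fst _ G) :=
      hP ▸ AddSubgroup.mem_zmultiples m
    rw [hx] at ha
    exact ⟨_, m, a, hm, mem_normalizer_comap_inr ha,
      eq_hatSubgroup_of_map_fst_eq_zmultiples ha hP⟩
  · intro H m a hm _
    refine index_ne_zero_of_mk_ofAdd_one_mem (n := orderOf a • m)
      (smul_ne_zero (orderOf_pos a).ne' hm.ne') ?_
    simpa only [Prod.pow_mk, ← ofAdd_nsmul, pow_orderOf_eq_one] using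
      pow_mem (mk_ofAdd_mem_hatSubgroup H m a) (orderOf a)
end

section
/- For a finite group G, two finite-index subgroups Ĥ(H, m, a) and Ĥ(H', m', a') of ℤ × G are conjugate in ℤ × G if and only if m = m' and there exists g ∈ G with H' = g⁻¹Hg and a' ∈ g⁻¹ a g · H'. -/
/-! Since `a` normalizes `H`, the subgroup `Ĥ(H, m, a)` is `⟨(m, a)⟩ · ({0} × H)`, so its elements
are exactly the `(k m, a ^ k h)` with `h ∈ H`. Hence (for `m > 0`) `Ĥ(H, m, a)` determines `H` as its
slice over `0`, `m` as the generator of its projection to `ℤ`, and `a` modulo `H`. Conjugation by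
`(t, g)` maps `Ĥ(H, m, a)` to `Ĥ(gHg⁻¹, m, gag⁻¹)`, so conjugacy reduces to equality of these data. -/

open Subgroup

theorem Subgroup.mk_mem_normalizer_map_inr {M G : Type*} [CommGroup M] [Group G]
    {H : Subgroup G} {a : G} (ha : a ∈ normalizer (H : Set G)) (t : M) :
    (t, a) ∈ normalizer (H.map (MonoidHom.inr M G) : Set (M × G)) := by
  rw [mem_normalizer_iff] at ha ⊢
  rintro ⟨s, h⟩
  simp [ha h]

theorem Subgroup.conj_mem_normalizer_map_conj {G : Type*} [Group G] {H : Subgroup G} {a : G}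
    (ha : a ∈ normalizer (H : Set G)) (g : G) :
    g * a * g⁻¹ ∈ normalizer (H.map (MulAut.conj g).toMonoidHom : Set G) := by
  rw [← map_equiv_normalizer_eq]
  exact mem_map_of_mem _ ha

namespace hatSubgroup

variable {G : Type*} [Group G] {H : Subgroup G} {m : ℤ} {a : G}

theorem eq_zpowers_sup (H : Subgroup G) (m : ℤ) (a : G) :
    hatSubgroup G H m a =
      zpowers (Multiplicative.ofAdd m, a) ⊔ H.map (MonoidHom.inr (Multiplicative ℤ) G) := by
  rw [hatSubgroup, Subgroup.closure_union, ← zpowers_eq_closure, sup_comm]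
  congr 1
  conv_rhs => rw [← H.closure_eq, MonoidHom.map_closure]
  rfl

theorem one_mk_mem (H : Subgroup G) (m : ℤ) (a : G) {h : G} (hh : h ∈ H) :
    ((1 : Multiplicative ℤ), h) ∈ hatSubgroup G H m a :=
  subset_closure (Or.inl ⟨h, hh, rfl⟩)

theorem mk_mem (H : Subgroup G) (m : ℤ) (a : G) :
    (Multiplicative.ofAdd m, a) ∈ hatSubgroup G H m a :=
  subset_closure (Or.inr rfl)

theorem mem_iff (ha : a ∈ normalizer (H : Set G)) {p : Multiplicative ℤ × G} :
    p ∈ hatSubgroup G H m a ↔ ∃ k : ℤ, p.1.toAdd = k * m ∧ (a ^ k)⁻¹ * p.2 ∈ H := by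
  rw [← SetLike.mem_coe, eq_zpowers_sup, coe_mul_of_left_le_normalizer_right _ _
    (zpowers_le.mpr (mk_mem_normalizer_map_inr ha _))]
  simp only [Set.mem_mul, SetLike.mem_coe, mem_zpowers_iff, mem_map, MonoidHom.inr_apply]
  constructor
  · rintro ⟨_, ⟨k, rfl⟩, _, ⟨h, hh, rfl⟩, rfl⟩
    exact ⟨k, by simp, by simpa⟩
  · rintro ⟨k, hk, hh⟩
    exact ⟨_, ⟨k, rfl⟩, _, ⟨_, hh, rfl⟩, by ext <;> simp [hk]⟩

theorem one_mk_mem_iff (ha : a ∈ normalizer (H : Set G)) (hm : m ≠ 0) {x : G} :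
    ((1 : Multiplicative ℤ), x) ∈ hatSubgroup G H m a ↔ x ∈ H := by
  simp [mem_iff ha, hm]

theorem le_of_inv_mul_mem {a₁ a₂ : G} (h : a₂⁻¹ * a₁ ∈ H) :
    hatSubgroup G H m a₁ ≤ hatSubgroup G H m a₂ := by
  refine closure_le _ |>.mpr ?_
  rintro _ (⟨x, hx, rfl⟩ | rfl)
  · exact one_mk_mem H m a₂ hx
  · simpa using mul_mem (mk_mem H m a₂) (one_mk_mem H m a₂ h)

theorem congr_of_inv_mul_mem {a₁ a₂ : G} (h : a₂⁻¹ * a₁ ∈ H) :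
    hatSubgroup G H m a₁ = hatSubgroup G H m a₂ :=
  le_antisymm (le_of_inv_mul_mem h) (le_of_inv_mul_mem (by simpa using inv_mem h))

variable {H₁ H₂ : Subgroup G} {m₁ m₂ : ℤ} {a₁ a₂ : G}

theorem subgroup_le_of_le (ha₂ : a₂ ∈ normalizer (H₂ : Set G)) (hm₂ : m₂ ≠ 0)
    (hle : hatSubgroup G H₁ m₁ a₁ ≤ hatSubgroup G H₂ m₂ a₂) : H₁ ≤ H₂ := fun _ hx =>
  (one_mk_mem_iff ha₂ hm₂).mp (hle (one_mk_mem H₁ m₁ a₁ hx))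

theorem exists_zpow_of_le (ha₂ : a₂ ∈ normalizer (H₂ : Set G))
    (hle : hatSubgroup G H₁ m₁ a₁ ≤ hatSubgroup G H₂ m₂ a₂) :
    ∃ k : ℤ, m₁ = k * m₂ ∧ (a₂ ^ k)⁻¹ * a₁ ∈ H₂ :=
  (mem_iff ha₂).mp (hle (mk_mem H₁ m₁ a₁))

theorem eq_iff (hm₁ : 0 < m₁) (hm₂ : 0 < m₂) (ha₁ : a₁ ∈ normalizer (H₁ : Set G))
    (ha₂ : a₂ ∈ normalizer (H₂ : Set G)) :
    hatSubgroup G H₁ m₁ a₁ = hatSubgroup G H₂ m₂ a₂ ↔ m₁ = m₂ ∧ H₁ = H₂ ∧ a₂⁻¹ * a₁ ∈ H₂ := by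
  constructor
  · intro h
    obtain ⟨k, hk, hmem⟩ := exists_zpow_of_le ha₂ h.le
    obtain ⟨l, hl, -⟩ := exists_zpow_of_le ha₁ h.ge
    have hm : m₁ = m₂ :=
      le_antisymm (Int.le_of_dvd hm₂ ⟨l, hl.trans (mul_comm _ _)⟩)
        (Int.le_of_dvd hm₁ ⟨k, hk.trans (mul_comm _ _)⟩)
    subst hm
    obtain rfl : k = 1 := (mul_eq_right₀ hm₁.ne').mp hk.symm
    exact ⟨rfl, le_antisymm (subgroup_le_of_le ha₂ hm₁.ne' h.le) (subgroup_le_of_le ha₁ hm₁.ne' h.ge),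
      by simpa using hmem⟩
  · rintro ⟨rfl, rfl, h⟩
    exact congr_of_inv_mul_mem h

theorem map_conj (H : Subgroup G) (m : ℤ) (a : G) (t : Multiplicative ℤ) (g : G) :
    (hatSubgroup G H m a).map (MulAut.conj (t, g)).toMonoidHom =
      hatSubgroup G (H.map (MulAut.conj g).toMonoidHom) m (g * a * g⁻¹) := by
  rw [eq_zpowers_sup, eq_zpowers_sup, Subgroup.map_sup, MonoidHom.map_zpowers, map_map, map_map]
  congr 2
  · ext <;> simp [mul_comm t]
  · ext x <;> simp

end hatSubgroup

theorem hatSubgroup_conj_iff_general {G : Type*} [Group G]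
    (H H' : Subgroup G) (m m' : ℤ) (a a' : G) (hm : 0 < m) (hm' : 0 < m')
    (ha : a ∈ Subgroup.normalizer (H : Set G)) (ha' : a' ∈ Subgroup.normalizer (H' : Set G)) :
    (∃ γ : Multiplicative ℤ × G,
        hatSubgroup G H' m' a' =
          Subgroup.map (MulAut.conj γ).toMonoidHom (hatSubgroup G H m a)) ↔
      m = m' ∧ ∃ g : G,
        H' = Subgroup.map (MulAut.conj g⁻¹).toMonoidHom H ∧ (g⁻¹ * a * g)⁻¹ * a' ∈ H' := by
  constructor
  · rintro ⟨⟨t, g⟩, hγ⟩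
    rw [hatSubgroup.map_conj] at hγ
    obtain ⟨rfl, rfl, hmem⟩ :=
      (hatSubgroup.eq_iff hm' hm ha' (conj_mem_normalizer_map_conj ha g)).mp hγ
    exact ⟨rfl, g⁻¹, by rw [inv_inv], by rwa [inv_inv]⟩
  · rintro ⟨rfl, g, rfl, hmem⟩
    refine ⟨(1, g⁻¹), ?_⟩
    rw [hatSubgroup.map_conj]
    exact hatSubgroup.congr_of_inv_mul_mem (by rwa [inv_inv])

/-- Two finite-index subgroups `Ĥ(H, m, a)` and `Ĥ(H', m', a')` of `ℤ × G` are conjugate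
in `ℤ × G` iff `m = m'` and there is `g ∈ G` with `H' = g⁻¹Hg` and `a' ∈ g⁻¹ a g · H'`. -/
theorem hatSubgroup_conj_iff {G : Type*} [Group G] [Finite G]
    (H H' : Subgroup G) (m m' : ℤ) (a a' : G) (hm : 0 < m) (hm' : 0 < m')
    (ha : a ∈ Subgroup.normalizer (H : Set G)) (ha' : a' ∈ Subgroup.normalizer (H' : Set G)) :
    (∃ γ : Multiplicative ℤ × G,
        hatSubgroup G H' m' a' =
          Subgroup.map (MulAut.conj γ).toMonoidHom (hatSubgroup G H m a)) ↔
      m = m' ∧ ∃ g : G,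
        H' = Subgroup.map (MulAut.conj g⁻¹).toMonoidHom H ∧ (g⁻¹ * a * g)⁻¹ * a' ∈ H' :=
  hatSubgroup_conj_iff_general H H' m m' a a' hm hm' ha ha'
end

section
/- Let G be a finite group and let σ be a G-equivariant bijection of a finite G-set A such that A is a single (ℤ × G)-orbit. Then all points of A have conjugate G-stabilizers H, the ℤ-orbits of all points have a common cardinality m·|G_x/H_x| for appropriate data, and A is isomorphic as a (ℤ × G)-set to (ℤ × G)/Ĥ(H, m, α) for some subgroup H ≤ G, positive integer m, and α in the normalizer of H. -/
/-- The `G`-stabilizer of a point of a `(ℤ × G)`-set: the subgroup of `g ∈ G` with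
`(0, g) • a = a`. -/
def gStabilizer {G : Type*} [Group G] {A : Type*} [MulAction (Multiplicative ℤ × G) A]
    (a : A) : Subgroup G :=
  (MulAction.stabilizer (Multiplicative ℤ × G) a).comap (MonoidHom.inr (Multiplicative ℤ) G)

open MulAction Multiplicative

theorem MulAction.exists_pow_mem_stabilizer {M α : Type*} [Group M] [MulAction M α] [Finite α]
    (g : M) (a : α) : ∃ n, 0 < n ∧ g ^ n ∈ stabilizer M a := by
  obtain ⟨n, hn, hgn⟩ := (isOfFinOrder_of_finite (toPermHom M α g)).exists_pow_eq_one
  refine ⟨n, hn, ?_⟩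
  rw [← map_pow] at hgn
  exact DFunLike.congr_fun hgn a

theorem MulAction.exists_equiv_quotient_stabilizer (M : Type*) {X : Type*} [Group M]
    [MulAction M X] [IsPretransitive M X] (x : X) :
    ∃ e : X ≃ M ⧸ stabilizer M x, ∀ (γ : M) (y : X), e (γ • y) = γ • e y := by
  have hbij : Function.Bijective (ofQuotientStabilizer M x) := by
    refine ⟨injective_ofQuotientStabilizer M x, fun y => ?_⟩
    obtain ⟨γ, rfl⟩ := exists_smul_eq M x y
    exact ⟨γ, ofQuotientStabilizer_mk (G := M) x γ⟩
  set e := Equiv.ofBijective _ hbij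
  refine ⟨e.symm, fun γ y => e.injective ?_⟩
  calc e (e.symm (γ • y)) = γ • e (e.symm y) := by rw [e.apply_symm_apply, e.apply_symm_apply]
    _ = e (γ • e.symm y) := (ofQuotientStabilizer_smul M x γ _).symm

open scoped Pointwise in
theorem Nat.card_range_smul_smul_of_commute {M α ι : Type*} [Group M] [MulAction M α]
    (f : ι → M) {γ : M} (hf : ∀ i, Commute (f i) γ) (a : α) :
    Nat.card (Set.range fun i => f i • γ • a) = Nat.card (Set.range fun i => f i • a) := by
  have hrange : (Set.range fun i => f i • γ • a) = γ • Set.range fun i => f i • a := by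
    simp only [Set.smul_set_range, smul_smul, (hf _).eq]
  rw [hrange, Nat.card_coe_set_eq, Set.ncard_smul_set, Nat.card_coe_set_eq]

section

variable {G : Type*} [Group G]

theorem gStabilizer_smul {A : Type*} [MulAction (Multiplicative ℤ × G) A]
    (γ : Multiplicative ℤ × G) (a : A) :
    gStabilizer (γ • a) = (gStabilizer a).map (MulAut.conj γ.2).toMonoidHom := by
  ext h
  have hconj : γ⁻¹ * MonoidHom.inr _ G h * γ = MonoidHom.inr _ G (γ.2⁻¹ * h * γ.2) := by
    ext <;> simp
  simp only [gStabilizer, stabilizer_smul_eq_stabilizer_map_conj, Subgroup.mem_comap,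
    Subgroup.mem_map_equiv, MulAut.conj_symm_apply, hconj]

theorem mem_normalizer_comap_inr_s11 {S : Subgroup (Multiplicative ℤ × G)} {m : ℤ} {α : G}
    (hα : (ofAdd m, α) ∈ S) :
    α ∈ Subgroup.normalizer (S.comap (MonoidHom.inr _ G) : Set G) := by
  refine Subgroup.mem_normalizer_iff.2 fun h => ?_
  have hconj : MonoidHom.inr _ G (α * h * α⁻¹) =
      (ofAdd m, α) * MonoidHom.inr _ G h * (ofAdd m, α)⁻¹ := by
    ext <;> simp
  simp only [Subgroup.mem_comap, hconj, S.mul_mem_cancel_right (S.inv_mem hα),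
    S.mul_mem_cancel_left hα]

theorem hatSubgroup_comap_inr {S : Subgroup (Multiplicative ℤ × G)} {m : ℤ} {α : G}
    (hα : (ofAdd m, α) ∈ S) (hdvd : ∀ x ∈ S, m ∣ x.1.toAdd) :
    hatSubgroup G (S.comap (MonoidHom.inr _ G)) m α = S := by
  refine le_antisymm ?_ fun x hx => ?_
  · rw [hatSubgroup, Subgroup.closure_le]
    rintro _ (⟨h, hh, rfl⟩ | rfl)
    exacts [hh, hα]
  · obtain ⟨q, hq⟩ := hdvd x hx
    set y := x * (ofAdd m, α) ^ (-q)
    have hy_inr : y = MonoidHom.inr _ G y.2 := by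
      ext
      · show x.1 * ofAdd m ^ (-q) = 1
        rw [← ofAdd_toAdd x.1, hq, ← ofAdd_zsmul, ← ofAdd_add, smul_eq_mul]
        simp [mul_comm]
      · rfl
    have hx_eq : x = MonoidHom.inr _ G y.2 * (ofAdd m, α) ^ q := by
      rw [← hy_inr, mul_assoc, zpow_neg, inv_mul_cancel, mul_one]
    have hy_mem : MonoidHom.inr _ G y.2 ∈ hatSubgroup G (S.comap (MonoidHom.inr _ G)) m α := by
      refine Subgroup.subset_closure (Or.inl ⟨y.2, ?_, rfl⟩)
      rw [SetLike.mem_coe, Subgroup.mem_comap, ← hy_inr]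
      exact S.mul_mem hx (S.zpow_mem hα _)
    have hgen : (ofAdd m, α) ∈ hatSubgroup G (S.comap (MonoidHom.inr _ G)) m α :=
      Subgroup.subset_closure (Or.inr rfl)
    rw [hx_eq]
    exact Subgroup.mul_mem _ hy_mem (Subgroup.zpow_mem _ hgen q)

theorem exists_pos_ofAdd_mem_forall_dvd {S : Subgroup (Multiplicative ℤ × G)} {k : ℤ} {g : G}
    (hk : k ≠ 0) (hkg : (ofAdd k, g) ∈ S) :
    ∃ m : ℕ, 0 < m ∧ ∃ α : G, (ofAdd (m : ℤ), α) ∈ S ∧ ∀ x ∈ S, (m : ℤ) ∣ x.1.toAdd := by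
  set P : AddSubgroup ℤ := (S.map (MonoidHom.fst _ G)).toAddSubgroup'
  have hP : ∀ j : ℤ, j ∈ P ↔ ∃ α : G, (ofAdd j, α) ∈ S := by
    intro j; simp [P]
  obtain ⟨a, ha⟩ := Int.subgroup_cyclic P
  rw [← AddSubgroup.zmultiples_eq_closure, ← Int.zmultiples_natAbs] at ha
  have hmem : ∀ j, j ∈ P ↔ (a.natAbs : ℤ) ∣ j := by
    intro j; rw [ha, Int.mem_zmultiples_iff]
  obtain ⟨α, hα⟩ := (hP _).1 ((hmem _).2 dvd_rfl)
  refine ⟨a.natAbs, Nat.pos_of_ne_zero fun h0 => hk ?_, α, hα,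
    fun x hx => (hmem _).1 ((hP _).2 ⟨x.2, hx⟩)⟩
  simpa [h0] using (hmem k).1 ((hP k).2 ⟨g, hkg⟩)

end

theorem transitive_finite_G_permutation_structure_general {G : Type*} [Group G]
    (A : Type) [MulAction (Multiplicative ℤ × G) A] [Finite A] [Nonempty A]
    (ht : MulAction.IsPretransitive (Multiplicative ℤ × G) A) :
    (∀ a b : A, ∃ g : G,
        gStabilizer b = Subgroup.map (MulAut.conj g).toMonoidHom (gStabilizer a)) ∧
    (∀ a b : A,
        Nat.card {c : A | ∃ k : ℤ, ((Multiplicative.ofAdd k, (1 : G)) : Multiplicative ℤ × G) • a = c} =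
        Nat.card {c : A | ∃ k : ℤ, ((Multiplicative.ofAdd k, (1 : G)) : Multiplicative ℤ × G) • b = c}) ∧
    ∃ (H : Subgroup G) (m : ℕ) (α : G), 0 < m ∧ α ∈ Subgroup.normalizer (H : Set G) ∧
      ∃ e : A ≃ (Multiplicative ℤ × G) ⧸ hatSubgroup G H (m : ℤ) α,
        ∀ (γ : Multiplicative ℤ × G) (a : A), e (γ • a) = γ • e a := by
  refine ⟨fun a b => ?_, fun a b => ?_, ?_⟩
  · obtain ⟨γ, rfl⟩ := ht.exists_smul_eq a b
    exact ⟨γ.2, gStabilizer_smul γ a⟩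
  · obtain ⟨γ, rfl⟩ := ht.exists_smul_eq a b
    exact (Nat.card_range_smul_smul_of_commute _
      (fun k => Prod.ext (mul_comm _ _) (by simp)) a).symm
  · obtain ⟨a₀⟩ := ‹Nonempty A›
    obtain ⟨n, hn, hna₀⟩ :=
      exists_pow_mem_stabilizer ((ofAdd 1, 1) : Multiplicative ℤ × G) a₀
    have hpow : ((ofAdd 1, 1) : Multiplicative ℤ × G) ^ n = (ofAdd (n : ℤ), 1) := by
      ext <;> simp [← ofAdd_nsmul]
    obtain ⟨m, hm, α, hα, hdvd⟩ :=
      exists_pos_ofAdd_mem_forall_dvd (by omega) (hpow ▸ hna₀)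
    obtain ⟨e, he⟩ := exists_equiv_quotient_stabilizer (Multiplicative ℤ × G) a₀
    refine ⟨gStabilizer a₀, m, α, hm, mem_normalizer_comap_inr_s11 hα, ?_⟩
    rw [gStabilizer, hatSubgroup_comap_inr hα hdvd]
    exact ⟨e, he⟩

/-- Let `G` be a finite group and let `A` be a finite `(ℤ × G)`-set which is a single
`(ℤ × G)`-orbit (equivalently, a finite `G`-set with a `G`-equivariant bijection `σ`,
the action of `(1, e)`, which is `(ℤ × G)`-transitive).  Then all points of `A` have
conjugate `G`-stabilizers, all `ℤ`-orbits have a common cardinality, and `A` is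
isomorphic as a `(ℤ × G)`-set to `(ℤ × G)/Ĥ(H, m, α)` for some subgroup `H ≤ G`,
positive integer `m` and `α` in the normalizer of `H`. -/
theorem transitive_finite_G_permutation_structure {G : Type*} [Group G] [Finite G]
    (A : Type) [MulAction (Multiplicative ℤ × G) A] [Finite A] [Nonempty A]
    (ht : MulAction.IsPretransitive (Multiplicative ℤ × G) A) :
    (∀ a b : A, ∃ g : G,
        gStabilizer b = Subgroup.map (MulAut.conj g).toMonoidHom (gStabilizer a)) ∧
    (∀ a b : A,
        Nat.card {c : A | ∃ k : ℤ, ((Multiplicative.ofAdd k, (1 : G)) : Multiplicative ℤ × G) • a = c} =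
        Nat.card {c : A | ∃ k : ℤ, ((Multiplicative.ofAdd k, (1 : G)) : Multiplicative ℤ × G) • b = c}) ∧
    ∃ (H : Subgroup G) (m : ℕ) (α : G), 0 < m ∧ α ∈ Subgroup.normalizer (H : Set G) ∧
      ∃ e : A ≃ (Multiplicative ℤ × G) ⧸ hatSubgroup G H (m : ℤ) α,
        ∀ (γ : Multiplicative ℤ × G) (a : A), e (γ • a) = γ • e a :=
  transitive_finite_G_permutation_structure_general A ht
end

section
/- Let G be a finite group, σ a G-equivariant bijection of a finite G-set A isomorphic as a (ℤ × G)-set to (ℤ × G)/Ĥ(H, m, α). Then for g ∈ G and k ≥ 1, the set of fixed points of g∘σ^k in A is nonempty only if Ĥ(H, m, α) is contained (up to conjugacy) in Ĥ(H', k, g) for some stabilizer data; in particular σ^k has a fixed point iff m divides k and α^{k/m} ∈ H. -/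
/-! The coset `γK` is fixed by `c` exactly when `c` lies in its stabilizer `γKγ⁻¹`. The element
`(k, 1)` is central in `ℤ × G`, so all these conjugates give the single condition `(k, 1) ∈ Ĥ`.
Since `α` normalizes `H`, `Ĥ(H, m, α) = ({0} × H) ⊔ ⟨(m, α)⟩ = {(nm, h α^n) | n ∈ ℤ, h ∈ H}`,
and `(k, 1)` has this form iff `k = nm` with `α^n ∈ H`. -/

open Subgroup

section Conjugates

variable {Γ : Type*} [Group Γ] (K : Subgroup Γ)

theorem MulAction.stabilizer_quotient_mk (γ : Γ) :
    stabilizer Γ (γ : Γ ⧸ K) = K.map (MulAut.conj γ).toMonoidHom := by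
  have := stabilizer_smul_eq_stabilizer_map_conj γ ((1 : Γ) : Γ ⧸ K)
  rwa [stabilizer_quotient, Quotient.smul_coe, smul_eq_mul, mul_one] at this

theorem QuotientGroup.exists_smul_eq_self_iff (c : Γ) :
    (∃ x : Γ ⧸ K, c • x = x) ↔ ∃ γ : Γ, c ∈ K.map (MulAut.conj γ).toMonoidHom := by
  simp only [← MulAction.stabilizer_quotient_mk, MulAction.mem_stabilizer_iff]
  exact QuotientGroup.mk_surjective.exists

theorem Subgroup.mem_map_conj_iff_of_mem_center {c : Γ} (hc : c ∈ center Γ) (γ : Γ) :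
    c ∈ K.map (MulAut.conj γ).toMonoidHom ↔ c ∈ K := by
  rw [mem_map_equiv, MulAut.conj_symm_apply, mul_assoc, (mem_center_iff.mp hc γ).symm,
    inv_mul_cancel_left]

theorem Prod.mk_one_mem_center {A : Type*} [CommGroup A] (z : A) :
    (z, (1 : Γ)) ∈ center (A × Γ) := by
  rw [Subgroup.center_prod, mem_prod, CommGroup.center_eq_top]
  exact ⟨mem_top z, one_mem _⟩

end Conjugates

section HatSubgroup

variable {G : Type*} [Group G] {H : Subgroup G} {a : G}

theorem hatSubgroup_eq_sup (m : ℤ) :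
    hatSubgroup G H m a = (⊥ : Subgroup (Multiplicative ℤ)).prod H ⊔ zpowers (.ofAdd m, a) := by
  rw [hatSubgroup, Subgroup.closure_union, ← zpowers_eq_closure]
  congr 1
  have : (fun h => ((1 : Multiplicative ℤ), h)) = MonoidHom.inr (Multiplicative ℤ) G := rfl
  rw [this, ← MonoidHom.map_closure, closure_eq]
  ext ⟨x, h⟩
  simp [mem_prod, eq_comm, and_comm]

theorem zpowers_le_normalizer_bot_prod (m : ℤ) (ha : a ∈ normalizer (H : Set G)) :
    zpowers ((.ofAdd m, a) : Multiplicative ℤ × G) ≤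
      normalizer ((⊥ : Subgroup (Multiplicative ℤ)).prod H : Set (Multiplicative ℤ × G)) := by
  rw [zpowers_le, mem_normalizer_iff]
  rintro ⟨x, h⟩
  simp only [mem_prod, Prod.mk_mul_mk, Prod.inv_mk, mem_bot]
  rw [mul_inv_cancel_comm, mem_normalizer_iff.mp ha h]

theorem mem_hatSubgroup_iff (m : ℤ) (ha : a ∈ normalizer (H : Set G))
    (p : Multiplicative ℤ × G) :
    p ∈ hatSubgroup G H m a ↔ ∃ n : ℤ, ∃ h ∈ H, p = (.ofAdd (n * m), h * a ^ n) := by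
  rw [hatSubgroup_eq_sup, ← SetLike.mem_coe,
    coe_mul_of_right_le_normalizer_left _ _ (zpowers_le_normalizer_bot_prod m ha)]
  simp only [Set.mem_mul, SetLike.mem_coe, mem_prod, mem_zpowers_iff, mem_bot]
  have hpow (n : ℤ) : ((.ofAdd m, a) : Multiplicative ℤ × G) ^ n = (.ofAdd (n * m), a ^ n) := by
    rw [Prod.pow_mk, ← ofAdd_zsmul, smul_eq_mul]
  constructor
  · rintro ⟨⟨_, h⟩, ⟨rfl, hh⟩, _, ⟨n, rfl⟩, rfl⟩
    exact ⟨n, h, hh, by rw [hpow, Prod.mk_mul_mk, one_mul]⟩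
  · rintro ⟨n, h, hh, rfl⟩
    exact ⟨(1, h), ⟨rfl, hh⟩, _, ⟨n, rfl⟩, by rw [hpow, Prod.mk_mul_mk, one_mul]⟩

theorem mk_one_mem_hatSubgroup_iff (m k : ℕ) (ha : a ∈ normalizer (H : Set G)) :
    ((.ofAdd (k : ℤ), 1) : Multiplicative ℤ × G) ∈ hatSubgroup G H m a ↔
      m ∣ k ∧ a ^ (k / m) ∈ H := by
  simp only [mem_hatSubgroup_iff m ha, Prod.mk.injEq, EmbeddingLike.apply_eq_iff_eq]
  constructor
  · rintro ⟨n, h, hh, hkn, hha⟩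
    have hdvd : m ∣ k := Int.natCast_dvd_natCast.mp ⟨n, by rw [hkn, mul_comm]⟩
    refine ⟨hdvd, ?_⟩
    obtain ⟨q, rfl⟩ := hdvd
    rcases Nat.eq_zero_or_pos m with rfl | hm
    · simp
    have hnq : n = q := by
      apply mul_right_cancel₀ (Int.natCast_ne_zero.mpr hm.ne')
      rw [← hkn]; push_cast; ring
    rw [Nat.mul_div_cancel_left q hm, ← zpow_natCast, ← hnq, eq_inv_of_mul_eq_one_right hha.symm]
    exact inv_mem hh
  · rintro ⟨hdvd, hk⟩
    refine ⟨(k / m : ℕ), (a ^ (k / m))⁻¹, inv_mem hk, ?_, ?_⟩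
    · exact_mod_cast (Nat.div_mul_cancel hdvd).symm
    · rw [zpow_natCast, inv_mul_cancel]

end HatSubgroup

theorem hatSubgroup_fixedPoint_iff_general {G : Type*} [Group G]
    (H : Subgroup G) (m : ℕ) (α : G) (hα : α ∈ Subgroup.normalizer (H : Set G))
    (k : ℕ) :
    (∀ g : G,
      (∃ x : (Multiplicative ℤ × G) ⧸ hatSubgroup G H (m : ℤ) α,
          ((Multiplicative.ofAdd (k : ℤ), g) : Multiplicative ℤ × G) • x = x) ↔
        ∃ γ : Multiplicative ℤ × G,
          ((Multiplicative.ofAdd (k : ℤ), g) : Multiplicative ℤ × G) ∈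
            Subgroup.map (MulAut.conj γ).toMonoidHom (hatSubgroup G H (m : ℤ) α)) ∧
    ((∃ x : (Multiplicative ℤ × G) ⧸ hatSubgroup G H (m : ℤ) α,
        ((Multiplicative.ofAdd (k : ℤ), (1 : G)) : Multiplicative ℤ × G) • x = x) ↔
      (m ∣ k ∧ α ^ (k / m) ∈ H)) := by
  refine ⟨fun g => QuotientGroup.exists_smul_eq_self_iff _ _, ?_⟩
  simp only [QuotientGroup.exists_smul_eq_self_iff,
    mem_map_conj_iff_of_mem_center _ (Prod.mk_one_mem_center _), exists_const]
  exact mk_one_mem_hatSubgroup_iff m k hα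

/-- On the `(ℤ × G)`-set `(ℤ × G)/Ĥ(H, m, α)` (where `σ` is the action of `(1, e)`),
for `g ∈ G` and `k ≥ 1` the map `g ∘ σ^k` has a fixed point iff `(k, g)` lies in some
conjugate of `Ĥ(H, m, α)`; in particular `σ^k` has a fixed point iff `m ∣ k` and
`α^{k/m} ∈ H`. -/
theorem hatSubgroup_fixedPoint_iff {G : Type*} [Group G] [Finite G]
    (H : Subgroup G) (m : ℕ) (α : G) (hm : 0 < m) (hα : α ∈ Subgroup.normalizer (H : Set G))
    (k : ℕ) (hk : 1 ≤ k) :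
    (∀ g : G,
      (∃ x : (Multiplicative ℤ × G) ⧸ hatSubgroup G H (m : ℤ) α,
          ((Multiplicative.ofAdd (k : ℤ), g) : Multiplicative ℤ × G) • x = x) ↔
        ∃ γ : Multiplicative ℤ × G,
          ((Multiplicative.ofAdd (k : ℤ), g) : Multiplicative ℤ × G) ∈
            Subgroup.map (MulAut.conj γ).toMonoidHom (hatSubgroup G H (m : ℤ) α)) ∧
    ((∃ x : (Multiplicative ℤ × G) ⧸ hatSubgroup G H (m : ℤ) α,
        ((Multiplicative.ofAdd (k : ℤ), (1 : G)) : Multiplicative ℤ × G) • x = x) ↔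
      (m ∣ k ∧ α ^ (k / m) ∈ H)) :=
  hatSubgroup_fixedPoint_iff_general H m α hα k
end

section
/- Let σ be a G-equivariant bijection of a finite G-set X such that all stabilizers of points are conjugate to a fixed subgroup H ≤ G, for 1 ≤ k < m₀ no G-orbit is mapped to itself by σ^k (i.e. g∘σ^k has no fixed points for all g ∈ G), and g₀∘σ^{m₀} = id for some g₀ ∈ G. Then g₀ normalizes H (centralizes it up to the orbit data), and X is isomorphic as a (ℤ × G)-set to a disjoint union of |X/G|/m₀ copies of (ℤ × G)/Ĥ(H, m₀, g₀); in particular m₀ divides the number of G-orbits of X. -/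
open MulAction

theorem MulAction.stabilizer_inv_smul_of_eq_map_conj {G X : Type*} [Group G] [MulAction G X]
    {H : Subgroup G} {x : X} {g : G} (hx : stabilizer G x = H.map (MulAut.conj g).toMonoidHom) :
    stabilizer G (g⁻¹ • x) = H := by
  rw [stabilizer_smul_eq_stabilizer_map_conj, hx, Subgroup.map_map]
  convert H.map_id
  ext h
  simp [mul_assoc]

theorem MulAction.exists_equiv_orbitRel_quotient_prod {K X : Type*} [Group K] [MulAction K X]
    (S : Subgroup K) (hS : ∀ x : X, ∃ k : K, stabilizer K (k • x) = S) :
    ∃ e : X ≃ orbitRel.Quotient K X × K ⧸ S,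
      ∀ (k : K) (x : X), e (k • x) = ((e x).1, k • (e x).2) := by
  choose κ hκ using fun ω : orbitRel.Quotient K X => hS ω.out
  let rep : orbitRel.Quotient K X → X := fun ω => κ ω • ω.out
  have hrep : Function.LeftInverse Quotient.mk'' rep := fun ω =>
    (Quotient.sound (mem_orbit _ _)).trans ω.out_eq
  let e : X ≃ orbitRel.Quotient K X × K ⧸ S :=
    (selfEquivSigmaOrbitsQuotientStabilizer' K X hrep).trans <|
      (Equiv.sigmaCongrRight fun ω => Subgroup.quotientEquivOfEq (hκ ω)).trans <|
        Equiv.sigmaEquivProd _ _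
  have he : ∀ ω (k : K), e.symm (ω, k) = k • rep ω := fun _ _ => rfl
  refine ⟨e, fun k x => e.symm.injective ?_⟩
  obtain ⟨⟨ω, q⟩, rfl⟩ := e.symm.surjective x
  induction q using QuotientGroup.induction_on with | H a => ?_
  rw [Equiv.apply_symm_apply, Equiv.symm_apply_apply, he, Quotient.smul_mk, he, smul_smul,
    smul_eq_mul]

section

variable {G X : Type*} [Group G] [MulAction G X] {σ : Equiv.Perm X}

theorem zpow_apply_smul (hσ : ∀ (g : G) (x : X), σ (g • x) = g • σ x) (n : ℤ) (g : G) (x : X) :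
    (σ ^ n) (g • x) = g • (σ ^ n) x :=
  congr($(((show Commute σ (toPerm g) from Equiv.ext (hσ g)).zpow_left n).eq) x)

abbrev zpowersProdAction (hσ : ∀ (g : G) (x : X), σ (g • x) = g • σ x) :
    MulAction (Multiplicative ℤ × G) X :=
  compHom X <| (zpowersHom (Equiv.Perm X) σ).noncommCoprod (toPermHom G X) fun _ g =>
    Commute.zpow_left (Equiv.ext (hσ g)) _

variable {m₀ : ℕ} {g₀ : G} (hg₀ : ∀ x : X, g₀ • (σ ^ m₀) x = x)
include hg₀

theorem zpow_natCast_mul_apply (q : ℤ) (x : X) : (σ ^ (m₀ * q)) x = g₀⁻¹ ^ q • x := by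
  have h : σ ^ (m₀ : ℤ) = toPermHom G X g₀⁻¹ :=
    Equiv.ext fun x => by simpa [eq_inv_smul_iff] using hg₀ x
  rw [zpow_mul, h, ← map_zpow]
  rfl

variable (hσ : ∀ (g : G) (x : X), σ (g • x) = g • σ x)
include hσ

theorem zpow_apply_eq_smul_zpow_emod (n : ℤ) (x : X) :
    (σ ^ n) x = g₀⁻¹ ^ (n / m₀) • (σ ^ (n % m₀)) x := by
  conv_lhs => rw [← Int.emod_add_mul_ediv n m₀, zpow_add, Equiv.Perm.mul_apply,
    zpow_natCast_mul_apply hg₀, zpow_apply_smul hσ]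

theorem mem_normalizer_of_stabilizer_eq {H : Subgroup G} {x : X} (hx : stabilizer G x = H) :
    g₀ ∈ Subgroup.normalizer (H : Set G) := by
  have hstab : stabilizer G (g₀⁻¹ • x) = stabilizer G x := by
    ext g
    rw [mem_stabilizer_iff, mem_stabilizer_iff, ← eq_inv_smul_iff.mpr (hg₀ x), ← zpow_natCast,
      ← zpow_apply_smul hσ, (σ ^ (m₀ : ℤ)).injective.eq_iff]
  rw [stabilizer_smul_eq_stabilizer_map_conj, hx] at hstab
  exact inv_mem_iff.mp (Subgroup.mem_normalizer_iff_map_conj_eq.mpr hstab)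

variable (hm₀ : 0 < m₀)
include hm₀

theorem exists_mem_orbit_pow_apply_of_mem_orbit [MulAction (Multiplicative ℤ × G) X]
    (hK : ∀ (k : Multiplicative ℤ × G) (x : X), k • x = k.2 • (σ ^ k.1.toAdd) x)
    {x y : X} (hy : y ∈ orbit (Multiplicative ℤ × G) x) :
    ∃ j : Fin m₀, y ∈ orbit G ((σ ^ (j : ℕ)) x) := by
  obtain ⟨⟨n, g⟩, rfl⟩ := hy
  have h0 := Int.emod_nonneg n.toAdd (Int.natCast_ne_zero.mpr hm₀.ne')
  have h1 := Int.emod_lt_of_pos n.toAdd (Int.natCast_pos.mpr hm₀)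
  refine ⟨⟨(n.toAdd % m₀).toNat, by omega⟩, g * g₀⁻¹ ^ (n.toAdd / m₀), ?_⟩
  dsimp only
  rw [hK, zpow_apply_eq_smul_zpow_emod hg₀ hσ, smul_smul, ← zpow_natCast,
    Int.toNat_of_nonneg h0]

variable (hfree : ∀ k : ℕ, 1 ≤ k → k < m₀ → ∀ (g : G) (x : X), g • (σ ^ k) x ≠ x)
include hfree

theorem dvd_of_smul_zpow_apply_eq {n : ℤ} {g : G} {x : X} (h : g • (σ ^ n) x = x) :
    (m₀ : ℤ) ∣ n := by
  rw [zpow_apply_eq_smul_zpow_emod hg₀ hσ, smul_smul] at h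
  have h0 := Int.emod_nonneg n (Int.natCast_ne_zero.mpr hm₀.ne')
  have h1 := Int.emod_lt_of_pos n (Int.natCast_pos.mpr hm₀)
  refine Int.dvd_of_emod_eq_zero <| by_contra fun hr =>
    hfree (n % m₀).toNat (by omega) (by omega) (g * g₀⁻¹ ^ (n / m₀)) x ?_
  rwa [← zpow_natCast, Int.toNat_of_nonneg h0]

theorem orbit_pow_apply_injective (x : X) :
    Function.Injective fun j : Fin m₀ =>
      (Quotient.mk'' ((σ ^ (j : ℕ)) x) : orbitRel.Quotient G X) := by
  intro i j hij
  obtain ⟨g, hg : g • (σ ^ (j : ℕ)) x = (σ ^ (i : ℕ)) x⟩ := Quotient.exact hij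
  have h : g⁻¹ • (σ ^ ((i : ℤ) - j)) ((σ ^ (j : ℕ)) x) = (σ ^ (j : ℕ)) x := by
    rw [← zpow_natCast, ← Equiv.Perm.mul_apply, ← zpow_add, sub_add_cancel, zpow_natCast,
      inv_smul_eq_iff]
    exact hg.symm
  have hij := Int.eq_zero_of_abs_lt_dvd (dvd_of_smul_zpow_apply_eq hg₀ hσ hm₀ hfree h)
    (abs_sub_lt_iff.mpr ⟨by omega, by omega⟩)
  exact Fin.ext (by omega)

variable [MulAction (Multiplicative ℤ × G) X]
  (hK : ∀ (k : Multiplicative ℤ × G) (x : X), k • x = k.2 • (σ ^ k.1.toAdd) x)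
include hK

theorem stabilizer_eq_hatSubgroup {H : Subgroup G} {x : X} (hx : stabilizer G x = H) :
    stabilizer (Multiplicative ℤ × G) x = hatSubgroup G H m₀ g₀ := by
  have hgen : ((Multiplicative.ofAdd (m₀ : ℤ), g₀) : Multiplicative ℤ × G)
      ∈ hatSubgroup G H m₀ g₀ := Subgroup.subset_closure (Or.inr rfl)
  apply le_antisymm
  · rintro ⟨n, g⟩ hk
    rw [mem_stabilizer_iff, hK] at hk
    obtain ⟨q, hq⟩ := dvd_of_smul_zpow_apply_eq hg₀ hσ hm₀ hfree hk
    have hgH : g * g₀⁻¹ ^ q ∈ H := by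
      rwa [← hx, mem_stabilizer_iff, mul_smul, ← zpow_natCast_mul_apply hg₀, ← hq]
    have hng : ((n, g) : Multiplicative ℤ × G)
        = (1, g * g₀⁻¹ ^ q) * (Multiplicative.ofAdd (m₀ : ℤ), g₀) ^ q := by
      ext
      · simp [hq, mul_comm]
      · simp
    rw [hng]
    exact mul_mem (Subgroup.subset_closure (Or.inl ⟨_, hgH, rfl⟩)) (zpow_mem hgen q)
  · rw [hatSubgroup, Subgroup.closure_le]
    rintro _ (⟨h, hh, rfl⟩ | rfl)
    · simpa [hK, ← hx] using hh
    · simpa [hK] using hg₀ x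

theorem card_orbitRel_quotient_eq_mul :
    Nat.card (orbitRel.Quotient G X)
      = Nat.card (orbitRel.Quotient (Multiplicative ℤ × G) X) * m₀ := by
  let π : orbitRel.Quotient G X → orbitRel.Quotient (Multiplicative ℤ × G) X :=
    Quotient.map' id fun _ _ ⟨g, hg⟩ => ⟨(1, g), by simpa [hK] using hg⟩
  have hπ : ∀ (j : ℕ) (x : X), π (Quotient.mk'' ((σ ^ j) x)) = Quotient.mk'' x := fun j _ =>
    Quotient.sound ⟨(Multiplicative.ofAdd (j : ℤ), 1), by simp [hK]⟩
  have hfiber : ∀ ω, Function.Bijective fun j : Fin m₀ =>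
      (⟨Quotient.mk'' ((σ ^ (j : ℕ)) ω.out), (hπ j _).trans ω.out_eq⟩ : {c // π c = ω}) := by
    refine fun ω => ⟨fun i j hij => orbit_pow_apply_injective hg₀ hσ hm₀ hfree _ congr($hij.1), ?_⟩
    rintro ⟨c, hc⟩
    induction c using Quotient.inductionOn' with | h y => ?_
    obtain ⟨j, hj⟩ := exists_mem_orbit_pow_apply_of_mem_orbit hg₀ hσ hm₀ hK
      (Quotient.exact' (hc.trans ω.out_eq.symm))
    exact ⟨j, Subtype.ext (Quotient.sound' hj).symm⟩
  rw [Nat.card_congr <| (Equiv.sigmaFiberEquiv π).symm.trans <|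
    (Equiv.sigmaCongrRight fun ω => (Equiv.ofBijective _ (hfiber ω)).symm).trans <|
      Equiv.sigmaEquivProd _ _, Nat.card_prod, Nat.card_fin]

end

theorem elementary_G_permutation_structure_general {G X : Type*} [Group G]
    [Fintype X] [Nonempty X] [MulAction G X]
    (σ : Equiv.Perm X) (hσ : ∀ (g : G) (x : X), σ (g • x) = g • σ x)
    (H : Subgroup G)
    (hstab : ∀ x : X, ∃ g : G,
      MulAction.stabilizer G x = Subgroup.map (MulAut.conj g).toMonoidHom H)
    (m₀ : ℕ) (hm₀ : 0 < m₀)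
    (hfree : ∀ k : ℕ, 1 ≤ k → k < m₀ → ∀ (g : G) (x : X), g • (σ ^ k) x ≠ x)
    (g₀ : G) (hg₀ : ∀ x : X, g₀ • (σ ^ m₀) x = x) :
    g₀ ∈ Subgroup.normalizer (H : Set G) ∧
    m₀ ∣ Nat.card (Quotient (MulAction.orbitRel G X)) ∧
    ∃ e : X ≃ Fin (Nat.card (Quotient (MulAction.orbitRel G X)) / m₀) ×
        ((Multiplicative ℤ × G) ⧸ hatSubgroup G H (m₀ : ℤ) g₀),
      (∀ (g : G) (x : X),
        e (g • x) = ((e x).1, ((Multiplicative.ofAdd (0 : ℤ), g) : Multiplicative ℤ × G) • (e x).2)) ∧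
      (∀ x : X,
        e (σ x) = ((e x).1, ((Multiplicative.ofAdd (1 : ℤ), (1 : G)) : Multiplicative ℤ × G) • (e x).2)) := by
  let := zpowersProdAction hσ
  have hK : ∀ (k : Multiplicative ℤ × G) (x : X), k • x = k.2 • (σ ^ k.1.toAdd) x :=
    fun _ _ => zpow_apply_smul hσ _ _ _
  have hH : ∀ x : X, ∃ k : Multiplicative ℤ × G, stabilizer G (k • x) = H := fun x =>
    let ⟨g, hg⟩ := hstab x
    ⟨(1, g⁻¹), by simpa [hK] using stabilizer_inv_smul_of_eq_map_conj hg⟩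
  obtain ⟨k₀, hk₀⟩ := hH (Classical.arbitrary X)
  obtain ⟨e, he⟩ := exists_equiv_orbitRel_quotient_prod (hatSubgroup G H m₀ g₀) fun x =>
    (hH x).imp fun _ => stabilizer_eq_hatSubgroup hg₀ hσ hm₀ hfree hK
  have hcard := card_orbitRel_quotient_eq_mul hg₀ hσ hm₀ hfree hK
  let eQ : Fin (Nat.card (orbitRel.Quotient G X) / m₀)
      ≃ orbitRel.Quotient (Multiplicative ℤ × G) X :=
    (finCongr (by rw [hcard, Nat.mul_div_cancel _ hm₀])).trans (Finite.equivFin _).symm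
  refine ⟨mem_normalizer_of_stabilizer_eq hg₀ hσ hk₀, Dvd.intro_left _ hcard.symm,
    e.trans (eQ.symm.prodCongr (Equiv.refl _)), fun g x => ?_, fun x => ?_⟩
  · simpa [hK] using congr(eQ.symm.prodCongr (Equiv.refl _) $(he (Multiplicative.ofAdd 0, g) x))
  · simpa [hK] using congr(eQ.symm.prodCongr (Equiv.refl _) $(he (Multiplicative.ofAdd 1, 1) x))

/-- Let `σ` be a `G`-equivariant bijection of a nonempty finite `G`-set `X` such that
all point stabilizers are conjugate to a fixed subgroup `H ≤ G`, for `1 ≤ k < m₀` no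
`G`-orbit is mapped to itself by `σ^k` (i.e. `g∘σ^k` has no fixed points for all
`g ∈ G`), and `g₀∘σ^{m₀} = id` for some `g₀ ∈ G`.  Then `g₀` normalizes `H`, `m₀`
divides the number `N` of `G`-orbits of `X`, and `X` is isomorphic as a `(ℤ × G)`-set to
the disjoint union of `N/m₀` copies of `(ℤ × G)/Ĥ(H, m₀, g₀)`. -/
theorem elementary_G_permutation_structure {G X : Type*} [Group G] [Finite G]
    [Fintype X] [Nonempty X] [MulAction G X]
    (σ : Equiv.Perm X) (hσ : ∀ (g : G) (x : X), σ (g • x) = g • σ x)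
    (H : Subgroup G)
    (hstab : ∀ x : X, ∃ g : G,
      MulAction.stabilizer G x = Subgroup.map (MulAut.conj g).toMonoidHom H)
    (m₀ : ℕ) (hm₀ : 0 < m₀)
    (hfree : ∀ k : ℕ, 1 ≤ k → k < m₀ → ∀ (g : G) (x : X), g • (σ ^ k) x ≠ x)
    (g₀ : G) (hg₀ : ∀ x : X, g₀ • (σ ^ m₀) x = x) :
    g₀ ∈ Subgroup.normalizer (H : Set G) ∧
    m₀ ∣ Nat.card (Quotient (MulAction.orbitRel G X)) ∧
    ∃ e : X ≃ Fin (Nat.card (Quotient (MulAction.orbitRel G X)) / m₀) ×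
        ((Multiplicative ℤ × G) ⧸ hatSubgroup G H (m₀ : ℤ) g₀),
      (∀ (g : G) (x : X),
        e (g • x) = ((e x).1, ((Multiplicative.ofAdd (0 : ℤ), g) : Multiplicative ℤ × G) • (e x).2)) ∧
      (∀ x : X,
        e (σ x) = ((e x).1, ((Multiplicative.ofAdd (1 : ℤ), (1 : G)) : Multiplicative ℤ × G) • (e x).2)) :=
  elementary_G_permutation_structure_general σ hσ H hstab m₀ hm₀ hfree g₀ hg₀
end
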